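/- arXiv:2401.13289 — 5 statements merged into one kernel-verified Lean document; each statement's English description precedes it below -/
import Mathlib

section
/- Let p be an odd prime and let R be a commutative ring graded by the natural numbers, i.e. R = ⊕_{l≥0} R_l is an internal direct sum of additive subgroups with R_k·R_l ⊆ R_{k+l}. Assume R is a ℚ-algebra and that every element of R whose degree-zero graded component is nonzero is a non-zero-divisor in R. Let a, b ∈ R⟦X⟧ be nonzero formal power series satisfying a^p = b^p. If the degree-zero graded components of the leading coefficients of a and b (the coefficient at the order of a, respectively of b) are equal and nonzero, then a = b. -/
/-!
Write `a = X ^ n * a₀` with `n` the order of `a`, so that the constant coefficient of `a₀` is the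
leading coefficient `α` of `a`, and likewise `b = X ^ m * b₀`. As `α` has nonzero degree-zero part,
it is a non-zero-divisor, so `a ^ p` has order exactly `p * n`; hence `a ^ p = b ^ p` forces
`n = m` and then `a₀ ^ p = b₀ ^ p`. Now `(∑ a₀ ^ i * b₀ ^ (p - 1 - i)) * (a₀ - b₀) = 0`, and the
degree-zero part of the constant coefficient of the first factor is `p * c ^ (p - 1)`, where
`c ≠ 0` is the common degree-zero part of the leading coefficients. Lying in degree zero, `c` is
itself a non-zero-divisor, hence so is the first factor, and `a₀ = b₀`.
-/

open PowerSeries nonZeroDivisors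

theorem eq_of_pow_eq_of_geom_sum₂_mem_nonZeroDivisors {S : Type*} [CommRing S] {x y : S} {n : ℕ}
    (hpow : x ^ n = y ^ n) (hsum : ∑ i ∈ Finset.range n, x ^ i * y ^ (n - 1 - i) ∈ S⁰) :
    x = y := by
  rw [← sub_eq_zero]
  apply (mem_nonZeroDivisors_iff_right.mp hsum) (x - y)
  rw [mul_comm, geom_sum₂_mul, hpow, sub_self]

namespace PowerSeries

variable {R : Type*} [CommRing R]

theorem order_X_pow_mul_of_constantCoeff_ne_zero {φ : R⟦X⟧} (hφ : constantCoeff φ ≠ 0) (k : ℕ) :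
    (X ^ k * φ).order = (k : ℕ∞) :=
  order_eq_nat.mpr ⟨by simpa [coeff_X_pow_mul'] using hφ,
    fun i hi => by simp [coeff_X_pow_mul', Nat.not_le.mpr hi]⟩

theorem pow_eq_X_pow_mul_divXPowOrder_pow (φ : R⟦X⟧) (k : ℕ) :
    φ ^ k = X ^ (k * φ.order.toNat) * divXPowOrder φ ^ k := by
  conv_lhs => rw [← X_pow_order_mul_divXPowOrder (f := φ)]
  rw [mul_pow, ← pow_mul, mul_comm φ.order.toNat]

theorem order_pow_of_coeff_order_mem_nonZeroDivisors [Nontrivial R] {φ : R⟦X⟧}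
    (hφ : coeff φ.order.toNat φ ∈ R⁰) (k : ℕ) :
    (φ ^ k).order = (k * φ.order.toNat : ℕ) := by
  have hlead : constantCoeff (divXPowOrder φ ^ k) ≠ 0 := by
    rw [map_pow, constantCoeff_divXPowOrder]
    exact nonZeroDivisors.ne_zero (pow_mem hφ k)
  rw [pow_eq_X_pow_mul_divXPowOrder_pow, order_X_pow_mul_of_constantCoeff_ne_zero hlead]

theorem eq_of_order_toNat_eq_of_divXPowOrder_eq {φ ψ : R⟦X⟧}
    (hord : φ.order.toNat = ψ.order.toNat) (hdiv : divXPowOrder φ = divXPowOrder ψ) : φ = ψ := by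
  rw [← X_pow_order_mul_divXPowOrder (f := φ), ← X_pow_order_mul_divXPowOrder (f := ψ), hord, hdiv]

theorem divXPowOrder_pow_eq_of_pow_eq {φ ψ : R⟦X⟧} {k : ℕ}
    (hord : φ.order.toNat = ψ.order.toNat) (hpow : φ ^ k = ψ ^ k) :
    divXPowOrder φ ^ k = divXPowOrder ψ ^ k := by
  rw [pow_eq_X_pow_mul_divXPowOrder_pow φ, pow_eq_X_pow_mul_divXPowOrder_pow ψ, hord] at hpow
  exact X_pow_mul_cancel hpow

end PowerSeries

section GradedRing

variable {ι R σ : Type*} [DecidableEq ι] [AddCommMonoid ι] [PartialOrder ι]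
  [CanonicallyOrderedAdd ι] [CommRing R] [SetLike σ R] [AddSubgroupClass σ R]
  (𝒜 : ι → σ) [GradedRing 𝒜]

theorem GradedRing.projZeroRingHom_idem (r : R) :
    projZeroRingHom 𝒜 (projZeroRingHom 𝒜 r) = projZeroRingHom 𝒜 r := by
  simp [projZeroRingHom_apply]

theorem GradedRing.projZeroRingHom_mem_nonZeroDivisors
    (hnzd : ∀ r : R, projZeroRingHom 𝒜 r ≠ 0 → r ∈ R⁰) {r : R} (hr : projZeroRingHom 𝒜 r ≠ 0) :
    projZeroRingHom 𝒜 r ∈ R⁰ :=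
  hnzd _ (by rwa [projZeroRingHom_idem])

theorem PowerSeries.eq_of_pow_eq_of_projZeroRingHom_constantCoeff_eq
    (hnzd : ∀ r : R, GradedRing.projZeroRingHom 𝒜 r ≠ 0 → r ∈ R⁰)
    {p : ℕ} (hp : (p : R) ∈ R⁰) {φ ψ : R⟦X⟧} (hpow : φ ^ p = ψ ^ p)
    (hconst : GradedRing.projZeroRingHom 𝒜 (constantCoeff φ) =
      GradedRing.projZeroRingHom 𝒜 (constantCoeff ψ))
    (hconst0 : GradedRing.projZeroRingHom 𝒜 (constantCoeff φ) ≠ 0) : φ = ψ := by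
  set π := (GradedRing.projZeroRingHom 𝒜).comp (constantCoeff (R := R))
  have : Nontrivial R := nontrivial_of_ne _ 0 hconst0
  have hc : π φ ∈ R⁰ := GradedRing.projZeroRingHom_mem_nonZeroDivisors 𝒜 hnzd hconst0
  refine eq_of_pow_eq_of_geom_sum₂_mem_nonZeroDivisors hpow
    (MvPowerSeries.mem_nonZeroDivisors_of_constantCoeff (hnzd _ ?_))
  change π _ ≠ 0
  rw [RingHom.map_geom_sum₂, show π ψ = π φ from hconst.symm, geom_sum₂_self]
  exact nonZeroDivisors.ne_zero (mul_mem hp (pow_mem hc _))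

end GradedRing

theorem powerSeries_pth_root_unique_of_graded_general
    {R : Type*} [CommRing R] [Algebra ℚ R]
    (𝒜 : ℕ → AddSubgroup R) [GradedRing 𝒜]
    (p : ℕ) (hp : p.Prime)
    (hnzd : ∀ r : R, GradedRing.proj 𝒜 0 r ≠ 0 → r ∈ nonZeroDivisors R)
    (a b : PowerSeries R) (ha : a ≠ 0) (hb : b ≠ 0)
    (hpow : a ^ p = b ^ p)
    (hlead :
      GradedRing.proj 𝒜 0
          (PowerSeries.coeff
            (a.order.lift (PowerSeries.order_finite_iff_ne_zero.mpr ha)) a) =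
        GradedRing.proj 𝒜 0
          (PowerSeries.coeff
            (b.order.lift (PowerSeries.order_finite_iff_ne_zero.mpr hb)) b))
    (hlead0 :
      GradedRing.proj 𝒜 0
          (PowerSeries.coeff
            (a.order.lift (PowerSeries.order_finite_iff_ne_zero.mpr ha)) a) ≠ 0) :
    a = b := by
  change ∀ r, GradedRing.projZeroRingHom 𝒜 r ≠ 0 → r ∈ R⁰ at hnzd
  change GradedRing.projZeroRingHom 𝒜 _ = GradedRing.projZeroRingHom 𝒜 _ at hlead
  change GradedRing.projZeroRingHom 𝒜 _ ≠ 0 at hlead0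
  simp only [ENat.lift_eq_toNat_of_lt_top] at hlead hlead0
  have : Nontrivial R := nontrivial_of_ne _ 0 hlead0
  have hpR : (p : R) ∈ R⁰ := by
    have hpQ : IsUnit (p : ℚ) := (Nat.cast_ne_zero.mpr hp.ne_zero).isUnit
    simpa using (hpQ.map (algebraMap ℚ R)).mem_nonZeroDivisors
  have hord : a.order.toNat = b.order.toNat := by
    have h := congrArg order hpow
    rw [order_pow_of_coeff_order_mem_nonZeroDivisors (hnzd _ hlead0),
      order_pow_of_coeff_order_mem_nonZeroDivisors (hnzd _ (hlead ▸ hlead0)), Nat.cast_inj] at h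
    exact Nat.eq_of_mul_eq_mul_left hp.pos h
  refine eq_of_order_toNat_eq_of_divXPowOrder_eq hord
    (eq_of_pow_eq_of_projZeroRingHom_constantCoeff_eq 𝒜 hnzd hpR
      (divXPowOrder_pow_eq_of_pow_eq hord hpow) ?_ ?_) <;>
  simpa only [constantCoeff_divXPowOrder]

/-- **The p-th root uniqueness lemma (Lemma `lemmapthroot`).**
Let `p` be an odd prime and `R` an `ℕ`-graded commutative `ℚ`-algebra
(`R = ⊕_{l ≥ 0} R_l`) in which every element with nonzero degree-zero graded
component is a non-zero-divisor.  If `a, b` are nonzero formal power series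
over `R` with `a ^ p = b ^ p`, and the degree-zero graded components of the
leading coefficients of `a` and `b` are equal and nonzero, then `a = b`. -/
theorem powerSeries_pth_root_unique_of_graded
    {R : Type*} [CommRing R] [Algebra ℚ R]
    (𝒜 : ℕ → AddSubgroup R) [GradedRing 𝒜]
    (p : ℕ) (hp : p.Prime) (hodd : Odd p)
    (hnzd : ∀ r : R, GradedRing.proj 𝒜 0 r ≠ 0 → r ∈ nonZeroDivisors R)
    (a b : PowerSeries R) (ha : a ≠ 0) (hb : b ≠ 0)
    (hpow : a ^ p = b ^ p)
    (hlead :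
      GradedRing.proj 𝒜 0
          (PowerSeries.coeff
            (a.order.lift (PowerSeries.order_finite_iff_ne_zero.mpr ha)) a) =
        GradedRing.proj 𝒜 0
          (PowerSeries.coeff
            (b.order.lift (PowerSeries.order_finite_iff_ne_zero.mpr hb)) b))
    (hlead0 :
      GradedRing.proj 𝒜 0
          (PowerSeries.coeff
            (a.order.lift (PowerSeries.order_finite_iff_ne_zero.mpr ha)) a) ≠ 0) :
    a = b :=
  powerSeries_pth_root_unique_of_graded_general 𝒜 p hp hnzd a b ha hb hpow hlead hlead0
end

section
/- Let R be a commutative ring and p a positive integer. Let a, b ∈ R⟦X⟧ be formal power series with a^p = b^p whose constant coefficients coincide, say c := a(0) = b(0). If p·c^{p−1} is a non-zero-divisor in R, then a = b. -/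
open Finset

theorem map_geom_sum₂_of_map_eq {R S F : Type*} [Semiring R] [Semiring S] [FunLike F R S]
    [RingHomClass F R S] (f : F) {x y : R} (h : f x = f y) (n : ℕ) :
    f (∑ i ∈ range n, x ^ i * y ^ (n - 1 - i)) = n * f x ^ (n - 1) := by
  simp only [map_sum, map_mul, map_pow, ← h, geom_sum₂_self]

theorem eq_of_pow_eq_pow_of_geom_sum₂_mem_nonZeroDivisors {R : Type*} [CommRing R] {x y : R}
    {n : ℕ} (h : x ^ n = y ^ n) (hS : ∑ i ∈ range n, x ^ i * y ^ (n - 1 - i) ∈ nonZeroDivisors R) :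
    x = y :=
  sub_eq_zero.mp <| (mul_left_mem_nonZeroDivisors_eq_zero_iff hS).mp <| by
    rw [geom_sum₂_mul, h, sub_self]

theorem powerSeries_pow_eq_pow_of_constantCoeff_eq_general
    {R : Type*} [CommRing R] (p : ℕ)
    (a b : PowerSeries R) (hpow : a ^ p = b ^ p)
    (hc : PowerSeries.constantCoeff a = PowerSeries.constantCoeff b)
    (hnzd : (p : R) * (PowerSeries.constantCoeff a) ^ (p - 1) ∈ nonZeroDivisors R) :
    a = b := by
  refine eq_of_pow_eq_pow_of_geom_sum₂_mem_nonZeroDivisors hpow ?_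
  -- `PowerSeries R` is `MvPowerSeries Unit R`, so the multivariate criterion applies.
  exact MvPowerSeries.mem_nonZeroDivisors_of_constantCoeff <|
    (map_geom_sum₂_of_map_eq PowerSeries.constantCoeff hc p).symm ▸ hnzd

/-- **p-th root uniqueness for power series, coefficientwise induction step.**
If `a ^ p = b ^ p` for power series over a commutative ring, the constant
coefficients of `a` and `b` agree, and `p * c ^ (p - 1)` is a non-zero-divisor
(where `c` is the common constant coefficient), then `a = b`. -/
theorem powerSeries_pow_eq_pow_of_constantCoeff_eq
    {R : Type*} [CommRing R] (p : ℕ) (hp : 0 < p)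
    (a b : PowerSeries R) (hpow : a ^ p = b ^ p)
    (hc : PowerSeries.constantCoeff a = PowerSeries.constantCoeff b)
    (hnzd : (p : R) * (PowerSeries.constantCoeff a) ^ (p - 1) ∈ nonZeroDivisors R) :
    a = b :=
  powerSeries_pow_eq_pow_of_constantCoeff_eq_general p a b hpow hc hnzd
end

section
/- Let R be a commutative ring graded by the natural numbers, i.e. R = ⊕_{l≥0} R_l is an internal direct sum of additive subgroups with R_k·R_l ⊆ R_{k+l}, and let p be a positive integer. Let a, b ∈ R with a^p = b^p, and suppose the degree-zero graded components of a and b are equal, say a_0 = b_0. If p·a_0^{p−1} is a non-zero-divisor in R, then a = b. -/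
/-!
`a ^ p - b ^ p = (a - b) * s` with `s = ∑ aⁱ b^(p-1-i)`, and since `a₀ = b₀` the degree-zero
part of `s` is `p * a₀ ^ (p - 1)`. In an `ℕ`-graded ring an element whose degree-zero part is a
non-zero-divisor is itself one: if `x * y = 0`, the lowest nonzero component `xₙ` of `x` would
satisfy `xₙ * y₀ = (x * y)ₙ = 0`. Hence `a - b = 0`.
-/

open DirectSum

namespace GradedRing

variable {A σ : Type*} [Semiring A] [SetLike σ A] [AddSubmonoidClass σ A] (𝒜 : ℕ → σ)
  [GradedRing 𝒜]

theorem proj_mul_of_proj_lt_eq_zero {x : A} (y : A) {n : ℕ}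
    (hx : ∀ i < n, proj 𝒜 i x = 0) : proj 𝒜 n (x * y) = proj 𝒜 n x * proj 𝒜 0 y := by
  simp only [proj_apply, decompose_mul, coe_mul_apply_eq_sum_antidiagonal]
  refine Finset.sum_eq_single (n, 0) (fun ij hij hne => ?_) (by simp)
  have hi : ij.1 < n := by
    rw [Finset.HasAntidiagonal.mem_antidiagonal] at hij
    by_contra! h
    exact hne (Prod.ext (by omega) (by omega))
  rw [← proj_apply, hx _ hi, zero_mul]

theorem mem_nonZeroDivisorsRight_of_proj_zero_mem {y : A}
    (hy : proj 𝒜 0 y ∈ nonZeroDivisorsRight A) : y ∈ nonZeroDivisorsRight A := by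
  intro x hxy
  have hcomp : ∀ n, proj 𝒜 n x = 0 := by
    intro n
    induction n using Nat.strong_induction_on with
    | _ n ih =>
      apply hy
      rw [← proj_mul_of_proj_lt_eq_zero 𝒜 y ih, hxy, map_zero]
  apply (decompose 𝒜).injective
  ext n
  simpa [proj_apply] using hcomp n

end GradedRing

open GradedRing

theorem graded_pow_eq_pow_of_proj_zero_eq_general
    {R : Type*} [CommRing R] (𝒜 : ℕ → AddSubgroup R) [GradedRing 𝒜]
    (p : ℕ) (a b : R) (hpow : a ^ p = b ^ p)
    (h0 : GradedRing.proj 𝒜 0 a = GradedRing.proj 𝒜 0 b)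
    (hnzd : (p : R) * (GradedRing.proj 𝒜 0 a) ^ (p - 1) ∈ nonZeroDivisors R) :
    a = b := by
  set s := ∑ i ∈ Finset.range p, a ^ i * b ^ (p - 1 - i)
  have hs0 : proj 𝒜 0 s = p * proj 𝒜 0 a ^ (p - 1) := calc
    proj 𝒜 0 s = ∑ i ∈ Finset.range p, proj 𝒜 0 a ^ i * proj 𝒜 0 b ^ (p - 1 - i) :=
      -- `proj 𝒜 0` is definitionally the ring hom `projZeroRingHom 𝒜`
      RingHom.map_geom_sum₂ a b p (projZeroRingHom 𝒜)
    _ = p * proj 𝒜 0 a ^ (p - 1) := by rw [← h0, geom_sum₂_self]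
  have hs : s ∈ nonZeroDivisorsRight R :=
    mem_nonZeroDivisorsRight_of_proj_zero_mem 𝒜 (hs0 ▸ hnzd.2)
  have hsub : (a - b) * s = 0 := by
    rw [mul_comm, geom_sum₂_mul, hpow, sub_self]
  exact sub_eq_zero.mp (hs _ hsub)

/-- **Graded induction step of the p-th root uniqueness lemma.**
Let `R = ⊕_{l ≥ 0} R_l` be an `ℕ`-graded commutative ring and `p` a positive
integer.  If `a ^ p = b ^ p`, the degree-zero graded components of `a` and `b`
coincide (call it `a₀`), and `p * a₀ ^ (p - 1)` is a non-zero-divisor in `R`,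
then `a = b`. -/
theorem graded_pow_eq_pow_of_proj_zero_eq
    {R : Type*} [CommRing R] (𝒜 : ℕ → AddSubgroup R) [GradedRing 𝒜]
    (p : ℕ) (hp : 0 < p) (a b : R) (hpow : a ^ p = b ^ p)
    (h0 : GradedRing.proj 𝒜 0 a = GradedRing.proj 𝒜 0 b)
    (hnzd : (p : R) * (GradedRing.proj 𝒜 0 a) ^ (p - 1) ∈ nonZeroDivisors R) :
    a = b :=
  graded_pow_eq_pow_of_proj_zero_eq_general 𝒜 p a b hpow h0 hnzd
end

section
/- Let p be an odd prime, ζ ∈ ℂ a primitive p-th root of unity, and n an integer not divisible by p. Let I be a finite type, let φ : I → ℂ⟦z⟧ be a family of formal power series, and let g : I × I → ℂ⟦z⟧ be a family of formal power series whose constant coefficients satisfy g_{a,b}(0) = 1 if a = b and g_{a,b}(0) = 0 otherwise. Suppose that for every a ∈ I one has ζ^n · rescale_{ζ^n}(φ_a) = Σ_{b∈I} g_{a,b}·φ_b in ℂ⟦z⟧, where rescale_c sends a power series Σ_m c_m z^m to Σ_m c^m·c_m z^m. Then for every a ∈ I and every m with 0 ≤ m ≤ p − 2, the coefficient of z^m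 in φ_a is zero; that is, each φ_a vanishes to order at least p − 1. -/
/-!
Comparing coefficients of `z^m` in the equivariance equation, the Kronecker-delta constant terms
of `g` reduce the right-hand side to the coefficient of `φ_a` as soon as every `φ_b` vanishes to
order `m`, while the left-hand side is that coefficient multiplied by `(ζ^n)^(m+1)`. As `ζ^n` is
again a primitive `p`-th root of unity, `(ζ^n)^(m+1) ≠ 1` for `m + 1 < p`, so by induction on `m`
the coefficients of order `m ≤ p - 2` all vanish.
-/

open PowerSeries

theorem PowerSeries.coeff_mul_of_X_pow_dvd {R : Type*} [CommSemiring R] {m : ℕ} {φ : R⟦X⟧}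
    (hφ : X ^ m ∣ φ) (ψ : R⟦X⟧) : coeff m (ψ * φ) = constantCoeff ψ * coeff m φ := by
  obtain ⟨χ, rfl⟩ := hφ
  simp [mul_left_comm ψ, coeff_X_pow_mul']

section Equivariant

variable {R : Type*} {I : Type*} [Fintype I] [DecidableEq I]
  {φ : I → R⟦X⟧} {g : I × I → R⟦X⟧} {c : R}

theorem pow_succ_mul_coeff_eq_coeff_of_rescale_eq_sum [CommSemiring R]
    (hg : ∀ a b : I, constantCoeff (g (a, b)) = if a = b then 1 else 0)
    (heq : ∀ a : I, C c * rescale c (φ a) = ∑ b : I, g (a, b) * φ b)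
    {m : ℕ} (hφ : ∀ b, X ^ m ∣ φ b) (a : I) :
    c ^ (m + 1) * coeff m (φ a) = coeff m (φ a) :=
  calc c ^ (m + 1) * coeff m (φ a) = coeff m (C c * rescale c (φ a)) := by
        rw [coeff_C_mul, coeff_rescale, pow_succ', mul_assoc]
    _ = ∑ b : I, constantCoeff (g (a, b)) * coeff m (φ b) := by
        simp only [heq, map_sum, coeff_mul_of_X_pow_dvd (hφ _)]
    _ = coeff m (φ a) := by simp [hg]

theorem X_pow_dvd_of_rescale_eq_sum [CommSemiring R] [IsRightCancelMulZero R]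
    (hg : ∀ a b : I, constantCoeff (g (a, b)) = if a = b then 1 else 0)
    (heq : ∀ a : I, C c * rescale c (φ a) = ∑ b : I, g (a, b) * φ b)
    {N : ℕ} (hc : ∀ k < N, c ^ (k + 1) ≠ 1) (a : I) : X ^ N ∣ φ a := by
  induction N generalizing a with
  | zero => simp
  | succ N ih =>
    have hφ : ∀ b, X ^ N ∣ φ b := ih fun k hk ↦ hc k (Nat.lt_succ_of_lt hk)
    have hcoeff : coeff N (φ a) = 0 :=
      (mul_left_eq_self₀.mp (pow_succ_mul_coeff_eq_coeff_of_rescale_eq_sum hg heq hφ a)).resolve_left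
        (hc N N.lt_succ_self)
    rw [X_pow_dvd_iff]
    intro d hd
    rcases (Nat.lt_succ_iff.mp hd).lt_or_eq with hd | rfl
    · exact X_pow_dvd_iff.mp (hφ a) d hd
    · exact hcoeff

end Equivariant

theorem equivariant_power_series_vanishing_general
    {p : ℕ} (hp : p.Prime) (ζ : ℂ)
    (hζ : IsPrimitiveRoot ζ p) (n : ℤ) (hn : ¬ (p : ℤ) ∣ n)
    {I : Type*} [Fintype I] [DecidableEq I]
    (φ : I → PowerSeries ℂ) (g : I × I → PowerSeries ℂ)
    (hg : ∀ a b : I,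
      PowerSeries.constantCoeff (g (a, b)) = if a = b then 1 else 0)
    (heq : ∀ a : I,
      PowerSeries.C (ζ ^ n) * PowerSeries.rescale (ζ ^ n) (φ a) =
        ∑ b : I, g (a, b) * φ b)
    (a : I) (m : ℕ) (hm : m ≤ p - 2) :
    PowerSeries.coeff m (φ a) = 0 := by
  have hcop : n.gcd p = 1 :=
    Int.isCoprime_iff_gcd_eq_one.mp
      ((Nat.prime_iff_prime_int.mp hp).coprime_iff_not_dvd.mpr hn).symm
  have hprim : IsPrimitiveRoot (ζ ^ n) p := hζ.zpow_of_gcd_eq_one n hcop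
  have hp2 := hp.two_le
  have hdvd : X ^ (p - 1) ∣ φ a :=
    X_pow_dvd_of_rescale_eq_sum hg heq
      (fun k hk ↦ hprim.pow_ne_one_of_pos_of_lt k.succ_ne_zero (by omega)) a
  exact X_pow_dvd_iff.mp hdvd m (by omega)

/-- **Local vanishing of equivariant Higgs field matrix entries (equation `eq:paj2`).**
Let `p` be an odd prime, `ζ` a primitive `p`-th root of unity in `ℂ`, and `n`
an integer not divisible by `p`.  Let `φ : I → ℂ⟦z⟧` be a finite family of
power series and `g : I × I → ℂ⟦z⟧` a family whose constant terms are the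
Kronecker delta.  If `ζ^n · rescale_{ζ^n}(φ_a) = ∑_b g_{a,b} · φ_b` for each
`a`, then every `φ_a` vanishes to order at least `p - 1`. -/
theorem equivariant_power_series_vanishing
    {p : ℕ} (hp : p.Prime) (hodd : Odd p) (ζ : ℂ)
    (hζ : IsPrimitiveRoot ζ p) (n : ℤ) (hn : ¬ (p : ℤ) ∣ n)
    {I : Type*} [Fintype I] [DecidableEq I]
    (φ : I → PowerSeries ℂ) (g : I × I → PowerSeries ℂ)
    (hg : ∀ a b : I,
      PowerSeries.constantCoeff (g (a, b)) = if a = b then 1 else 0)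
    (heq : ∀ a : I,
      PowerSeries.C (ζ ^ n) * PowerSeries.rescale (ζ ^ n) (φ a) =
        ∑ b : I, g (a, b) * φ b)
    (a : I) (m : ℕ) (hm : m ≤ p - 2) :
    PowerSeries.coeff m (φ a) = 0 :=
  equivariant_power_series_vanishing_general hp ζ hζ n hn φ g hg heq a m hm
end

section
/- Let p be a prime, X a type, and f : X → X a bijection with f^p = id, generating an action of ℤ/pℤ on X. Let X^f denote the fixed-point set of f and X̃ the set of f-orbits with quotient map π : X → X̃. Fix c ∈ ℕ. Then the assignment (j, D̃) ↦ D, where D(x) = j(x) + p·D̃(π(x)) for x ∈ X^f and D(x) = D̃(π(x)) for x ∉ X^f, defines a bijection from the set of pairs (j, D̃) — with j : X^f → {0,…,p−1} finitely supported, D̃ : X̃ → ℕ finitely supported, and p·(Σ_{ỹ∈X̃} D̃(ỹ)) + Σ_{x∈X^f} j(x) = c — onto the set of f-invariant finitely supported functions D : X → ℕ with D∘f = D and Σ_{x∈X} D(x) = c. -/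
/-!
Since `f^[p] = id` with `p` prime, the minimal period of every point divides `p`: each fibre of
`π` is either a single fixed point or a free orbit of exactly `p` points. Weighting a point by its
ramification index (`p` at fixed points, `1` elsewhere) therefore gives every fibre total weight
`p`, and summing fibrewise shows that the lift `j + π^* D̃` has degree `p · deg D̃ + deg j`.
Conversely an invariant `D` is constant on fibres, so it is recovered from `D̃ (π x)`, which is
`D x / p` at a fixed point and `D x` elsewhere, and from the residues `j x = D x % p` at fixed
points; the bound `j < p` makes this division with remainder unique.
-/

open Function Set

section Finsum

variable {α β M : Type*} [AddCommMonoid M]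

theorem finsum_eq_finsum_fiberwise (π : α → β) {g : α → M} (hg : (support g).Finite) :
    ∑ᶠ x, g x = ∑ᶠ y, ∑ᶠ x ∈ π ⁻¹' {y}, g x := by
  classical
  set s := hg.toFinset
  have hfiber (y : β) : ∑ᶠ x ∈ π ⁻¹' {y}, g x = ∑ x ∈ s with π x = y, g x := by
    apply finsum_mem_eq_sum_of_inter_support_eq
    ext x
    simp [s, and_comm]
  simp_rw [hfiber]
  rw [finsum_eq_sum_of_support_subset _ (Finset.support_of_fiberwise_sum_subset_image s g π),
    Finset.sum_fiberwise_of_maps_to (fun x hx => Finset.mem_image_of_mem π hx),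
    finsum_eq_sum_of_support_subset _ hg.coe_toFinset.ge]

theorem finite_support_dite_subtype {P : α → Prop} [DecidablePred P] {g : Subtype P → M}
    (hg : (support g).Finite) : (support fun x => if h : P x then g ⟨x, h⟩ else 0).Finite := by
  refine (hg.image Subtype.val).subset fun x hx => ?_
  by_cases h : P x
  · exact ⟨⟨x, h⟩, by simpa [h] using hx, rfl⟩
  · simp [h] at hx

theorem finsum_dite_subtype {P : α → Prop} [DecidablePred P] (g : Subtype P → M) :
    ∑ᶠ x, (if h : P x then g ⟨x, h⟩ else 0) = ∑ᶠ x, g x :=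
  calc ∑ᶠ x, (if h : P x then g ⟨x, h⟩ else 0)
      = ∑ᶠ (x) (_ : P x), (if h : P x then g ⟨x, h⟩ else 0) :=
        finsum_congr fun x => by by_cases h : P x <;> simp [h]
    _ = ∑ᶠ x, g x := by
        rw [← finsum_subtype_eq_finsum_cond]
        exact finsum_congr fun x => dif_pos x.2

variable {R : Type*} [CommSemiring R]

theorem finite_support_mul_comp {π : α → β} (hfin : ∀ y, (π ⁻¹' {y}).Finite) (e : α → R)
    {D : β → R} (hD : (support D).Finite) : (support fun x => e x * D (π x)).Finite :=
  (hD.preimage' fun y _ => hfin y).subset <|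
    (support_mul_subset_right e (D ∘ π)).trans (support_comp_eq_preimage D π).subset

theorem finsum_mul_comp_eq_mul_finsum {π : α → β} (hfin : ∀ y, (π ⁻¹' {y}).Finite) {e : α → R}
    {r : R} (he : ∀ y, ∑ᶠ x ∈ π ⁻¹' {y}, e x = r) {D : β → R} (hD : (support D).Finite) :
    ∑ᶠ x, e x * D (π x) = r * ∑ᶠ y, D y := by
  rw [finsum_eq_finsum_fiberwise π (finite_support_mul_comp hfin e hD), mul_finsum' _ _ hD]
  refine finsum_congr fun y => ?_
  calc ∑ᶠ x ∈ π ⁻¹' {y}, e x * D (π x) = ∑ᶠ x ∈ π ⁻¹' {y}, e x * D y :=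
        finsum_mem_congr rfl fun x (hx : π x = y) => by rw [hx]
    _ = r * D y := by rw [← finsum_mem_mul' _ _ (hfin y), he]

end Finsum

section Orbits

variable {X Xq : Type*} {p : ℕ} {f : X → X} {π : X → Xq}

def IsOrbitMap (f : X → X) (π : X → Xq) : Prop :=
  ∀ x y : X, π x = π y ↔ ∃ k : ℕ, f^[k] x = y

theorem eq_of_map_eq_of_apply_eq_self (hfib : IsOrbitMap f π) {x y : X} (hx : f x = x)
    (hxy : π x = π y) : y = x := by
  obtain ⟨k, rfl⟩ := (hfib x y).1 hxy
  exact iterate_fixed hx k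

theorem map_apply_eq_map (hfib : IsOrbitMap f π) (x : X) : π (f x) = π x :=
  ((hfib x (f x)).2 ⟨1, rfl⟩).symm

theorem apply_eq_of_comp_eq_of_map_eq (hfib : IsOrbitMap f π)
    {β : Type*} {D : X → β} (hD : D ∘ f = D) {x y : X} (hxy : π x = π y) : D x = D y := by
  obtain ⟨k, rfl⟩ := (hfib x y).1 hxy
  exact (congrFun (iterate_invariant hD k) x).symm

theorem preimage_map_eq_image_iterate (hp : 0 < p) (hfp : f^[p] = id) (hfib : IsOrbitMap f π)
    (x : X) : π ⁻¹' {π x} = (f^[·] x) '' Iio p := by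
  have hper : IsPeriodicPt f p x := congrFun hfp x
  ext y
  simp only [mem_preimage, mem_singleton_iff, eq_comm (a := π y), hfib x y, mem_image, mem_Iio]
  constructor
  · rintro ⟨k, rfl⟩
    exact ⟨k % p, Nat.mod_lt k hp, hper.iterate_mod_apply k⟩
  · rintro ⟨k, -, rfl⟩
    exact ⟨k, rfl⟩

theorem finite_preimage_singleton (hp : 0 < p) (hfp : f^[p] = id) (hfib : IsOrbitMap f π)
    (y : Xq) : (π ⁻¹' {y}).Finite := by
  by_cases hy : y ∈ range π
  · obtain ⟨x, rfl⟩ := hy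
    rw [preimage_map_eq_image_iterate hp hfp hfib x]
    exact (finite_Iio p).image _
  · rw [preimage_singleton_eq_empty.2 hy]
    exact finite_empty

theorem ncard_preimage_map_of_apply_ne (hp : p.Prime) (hfp : f^[p] = id) (hfib : IsOrbitMap f π)
    {x : X} (hx : f x ≠ x) : (π ⁻¹' {π x}).ncard = p := by
  have : Fact p.Prime := ⟨hp⟩
  have hmin : minimalPeriod f x = p := minimalPeriod_eq_prime (congrFun hfp x) hx
  rw [preimage_map_eq_image_iterate hp.pos hfp hfib x, ← hmin,
    iterate_injOn_Iio_minimalPeriod.ncard_image, ncard_Iio_nat]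

open Classical in
noncomputable def ramification (p : ℕ) (f : X → X) (x : X) : ℕ :=
  if f x = x then p else 1

theorem finsum_ramification_preimage (hp : p.Prime) (hfp : f^[p] = id)
    (hfib : IsOrbitMap f π) (hπ : Surjective π) (y : Xq) :
    ∑ᶠ x ∈ π ⁻¹' {y}, ramification p f x = p := by
  obtain ⟨x, rfl⟩ := hπ y
  by_cases hx : f x = x
  · have hfiber : π ⁻¹' {π x} = {x} :=
      eq_singleton_iff_unique_mem.2
        ⟨rfl, fun z hz => eq_of_map_eq_of_apply_eq_self hfib hx hz.symm⟩
    rw [hfiber, finsum_mem_singleton, ramification, if_pos hx]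
  · have hunramified : ∀ z ∈ π ⁻¹' {π x}, ramification p f z = 1 := fun z (hz : π z = π x) =>
      if_neg fun hz' => hx (eq_of_map_eq_of_apply_eq_self hfib hz' hz ▸ hz')
    rw [finsum_mem_congr rfl hunramified, finsum_one,
      ncard_preimage_map_of_apply_ne hp hfp hfib hx]

open Classical in
noncomputable def liftDivisor (p : ℕ) (f : X → X) (π : X → Xq) (j : {x : X // f x = x} → ℕ)
    (D : Xq → ℕ) (x : X) : ℕ :=
  if h : f x = x then j ⟨x, h⟩ + p * D (π x) else D (π x)

open Classical in
theorem liftDivisor_eq_add (j : {x : X // f x = x} → ℕ) (D : Xq → ℕ) (x : X) :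
    liftDivisor p f π j D x =
      (if h : f x = x then j ⟨x, h⟩ else 0) + ramification p f x * D (π x) := by
  unfold liftDivisor ramification
  split_ifs <;> simp

theorem liftDivisor_of_apply_ne {j : {x : X // f x = x} → ℕ} {D : Xq → ℕ} {x : X}
    (hx : f x ≠ x) : liftDivisor p f π j D x = D (π x) :=
  dif_neg hx

theorem liftDivisor_mod {j : {x : X // f x = x} → ℕ} (hj : ∀ x, j x < p) (D : Xq → ℕ)
    (x : {x : X // f x = x}) : liftDivisor p f π j D x % p = j x := by
  rw [liftDivisor, dif_pos x.2, Nat.add_mul_mod_self_left, Nat.mod_eq_of_lt (hj x)]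

theorem liftDivisor_div {j : {x : X // f x = x} → ℕ} (hj : ∀ x, j x < p) (D : Xq → ℕ)
    (x : {x : X // f x = x}) : liftDivisor p f π j D x / p = D (π x) := by
  rw [liftDivisor, dif_pos x.2, Nat.add_mul_div_left _ _ ((Nat.zero_le _).trans_lt (hj x)),
    Nat.div_eq_of_lt (hj x), zero_add]

theorem finite_support_liftDivisor (hp : 0 < p) (hfp : f^[p] = id) (hfib : IsOrbitMap f π)
    {j : {x : X // f x = x} → ℕ} {D : Xq → ℕ} (hj : (support j).Finite) (hD : (support D).Finite) :
    (support (liftDivisor p f π j D)).Finite := by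
  classical
  rw [funext (liftDivisor_eq_add j D)]
  exact ((finite_support_dite_subtype hj).union (finite_support_mul_comp
    (finite_preimage_singleton hp hfp hfib) _ hD)).subset (support_add _ _)

theorem finsum_liftDivisor (hp : p.Prime) (hfp : f^[p] = id)
    (hfib : IsOrbitMap f π) (hπ : Surjective π)
    {j : {x : X // f x = x} → ℕ} {D : Xq → ℕ} (hj : (support j).Finite)
    (hD : (support D).Finite) :
    ∑ᶠ x, liftDivisor p f π j D x = p * ∑ᶠ y, D y + ∑ᶠ x, j x := by
  classical
  have hfin := finite_preimage_singleton hp.pos hfp hfib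
  simp_rw [liftDivisor_eq_add]
  rw [finsum_add_distrib (finite_support_dite_subtype hj) (finite_support_mul_comp hfin _ hD),
    finsum_dite_subtype, finsum_mul_comp_eq_mul_finsum hfin
      (finsum_ramification_preimage hp hfp hfib hπ) hD, add_comm]

theorem liftDivisor_comp_self (hfib : IsOrbitMap f π) (j : {x : X // f x = x} → ℕ) (D : Xq → ℕ) :
    liftDivisor p f π j D ∘ f = liftDivisor p f π j D := by
  funext x
  by_cases hx : f x = x
  · rw [comp_apply, hx]
  · have hfx : f (f x) ≠ f x := fun h =>
      hx (eq_of_map_eq_of_apply_eq_self hfib h (map_apply_eq_map hfib x)).symm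
    rw [comp_apply, liftDivisor_of_apply_ne hx, liftDivisor_of_apply_ne hfx, map_apply_eq_map hfib]

theorem eq_of_liftDivisor_eq (hπ : Surjective π) {j₁ j₂ : {x : X // f x = x} → ℕ}
    {D₁ D₂ : Xq → ℕ} (hj₁ : ∀ x, j₁ x < p) (hj₂ : ∀ x, j₂ x < p)
    (h : liftDivisor p f π j₁ D₁ = liftDivisor p f π j₂ D₂) : j₁ = j₂ ∧ D₁ = D₂ := by
  have hD : D₁ = D₂ := by
    funext y
    obtain ⟨x, rfl⟩ := hπ y
    by_cases hx : f x = x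
    · rw [← liftDivisor_div hj₁ D₁ ⟨x, hx⟩, ← liftDivisor_div hj₂ D₂ ⟨x, hx⟩, h]
    · have hx' := congrFun h x
      rwa [liftDivisor_of_apply_ne hx, liftDivisor_of_apply_ne hx] at hx'
  refine ⟨funext fun x => ?_, hD⟩
  rw [← liftDivisor_mod hj₁ D₁ x, ← liftDivisor_mod hj₂ D₂ x, h]

theorem exists_liftDivisor_eq (hp : 0 < p) (hfib : IsOrbitMap f π) (hπ : Surjective π)
    {D : X → ℕ} (hD : (support D).Finite) (hDf : D ∘ f = D) :
    ∃ (j : {x : X // f x = x} → ℕ) (D' : Xq → ℕ), (support j).Finite ∧ (∀ x, j x < p) ∧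
      (support D').Finite ∧ liftDivisor p f π j D' = D := by
  set s := surjInv hπ
  have hs : ∀ y, π (s y) = y := rightInverse_surjInv hπ
  refine ⟨fun x => D x % p, fun y => D (s y) / ramification p f (s y), ?_, fun x => Nat.mod_lt _ hp,
    (hD.image π).subset fun y hy => ⟨s y, fun h0 => hy (by simp [h0]), hs y⟩, funext fun x => ?_⟩
  · exact (hD.preimage Subtype.val_injective.injOn).subset fun x hx h0 => hx (by simp [h0])
  by_cases hx : f x = x
  · have hsx : s (π x) = x := eq_of_map_eq_of_apply_eq_self hfib hx (hs (π x)).symm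
    rw [liftDivisor, dif_pos hx, hsx, ramification, if_pos hx, Nat.mod_add_div]
  · have hsx : f (s (π x)) ≠ s (π x) := fun h =>
      hx (eq_of_map_eq_of_apply_eq_self hfib h (hs (π x)) ▸ h)
    rw [liftDivisor_of_apply_ne hx, ramification, if_neg hsx, Nat.div_one]
    exact apply_eq_of_comp_eq_of_map_eq hfib hDf (hs (π x))

end Orbits

open Classical in
theorem fixedPoint_divisor_decomposition_bijective_general
    {X Xq : Type*} {p : ℕ} (hp : p.Prime) (f : X → X) (hfp : f^[p] = id)
    (π : X → Xq) (hπ : Function.Surjective π)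
    (hfib : ∀ x y : X, π x = π y ↔ ∃ k : ℕ, f^[k] x = y) (c : ℕ) :
    Set.BijOn
      (fun jD : ({x : X // f x = x} → ℕ) × (Xq → ℕ) => fun x : X =>
        if h : f x = x then jD.1 ⟨x, h⟩ + p * jD.2 (π x) else jD.2 (π x))
      {jD | (Function.support jD.1).Finite ∧ (∀ x, jD.1 x ≤ p - 1) ∧
        (Function.support jD.2).Finite ∧
        p * (∑ᶠ y, jD.2 y) + ∑ᶠ x, jD.1 x = c}
      {D : X → ℕ | (Function.support D).Finite ∧ D ∘ f = D ∧ ∑ᶠ x, D x = c} := by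
  change BijOn (fun jD : ({x : X // f x = x} → ℕ) × (Xq → ℕ) => liftDivisor p f π jD.1 jD.2)
    _ _
  have hle_iff {j : {x : X // f x = x} → ℕ} : (∀ x, j x ≤ p - 1) ↔ ∀ x, j x < p :=
    forall_congr' fun x => Nat.le_sub_one_iff_lt hp.pos
  refine ⟨?_, ?_, ?_⟩
  · rintro ⟨j, D⟩ ⟨hj, -, hD, rfl⟩
    exact ⟨finite_support_liftDivisor hp.pos hfp hfib hj hD, liftDivisor_comp_self hfib j D,
      finsum_liftDivisor hp hfp hfib hπ hj hD⟩
  · rintro ⟨j₁, D₁⟩ ⟨-, hj₁, -, -⟩ ⟨j₂, D₂⟩ ⟨-, hj₂, -, -⟩ h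
    obtain ⟨rfl, rfl⟩ := eq_of_liftDivisor_eq hπ (hle_iff.1 hj₁) (hle_iff.1 hj₂) h
    rfl
  · rintro D ⟨hD, hDf, rfl⟩
    obtain ⟨j, D', hj, hjp, hD', rfl⟩ := exists_liftDivisor_eq hp.pos hfib hπ hD hDf
    exact ⟨(j, D'), ⟨hj, hle_iff.2 hjp, hD', (finsum_liftDivisor hp hfp hfib hπ hj hD').symm⟩, rfl⟩

open Classical in
/-- **Combinatorial core of Lemma `lem:S^m(C)^f`, part (1).**
Let `p` be a prime and `f : X → X` a bijection with `f^[p] = id`, let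
`π : X → X̃` be the quotient map onto the set of `f`-orbits, and fix `c : ℕ`.
The assignment `(j, D̃) ↦ D`, with `D x = j x + p · D̃ (π x)` at fixed points
and `D x = D̃ (π x)` elsewhere, is a bijection from the set of pairs of
finitely supported functions `j : X^f → {0, …, p-1}`, `D̃ : X̃ → ℕ` with
`p · (∑ ỹ, D̃ ỹ) + ∑ x, j x = c` onto the set of `f`-invariant finitely
supported functions `D : X → ℕ` of total sum `c`. -/
theorem fixedPoint_divisor_decomposition_bijective
    {X Xq : Type*} {p : ℕ} (hp : p.Prime) (f : X → X)
    (hf : Function.Bijective f) (hfp : f^[p] = id)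
    (π : X → Xq) (hπ : Function.Surjective π)
    (hfib : ∀ x y : X, π x = π y ↔ ∃ k : ℕ, f^[k] x = y) (c : ℕ) :
    Set.BijOn
      (fun jD : ({x : X // f x = x} → ℕ) × (Xq → ℕ) => fun x : X =>
        if h : f x = x then jD.1 ⟨x, h⟩ + p * jD.2 (π x) else jD.2 (π x))
      {jD | (Function.support jD.1).Finite ∧ (∀ x, jD.1 x ≤ p - 1) ∧
        (Function.support jD.2).Finite ∧
        p * (∑ᶠ y, jD.2 y) + ∑ᶠ x, jD.1 x = c}
      {D : X → ℕ | (Function.support D).Finite ∧ D ∘ f = D ∧ ∑ᶠ x, D x = c} :=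
  fixedPoint_divisor_decomposition_bijective_general hp f hfp π hπ hfib c
end
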